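/- arXiv:1203.6262 — 7 statements merged into one kernel-verified Lean document; each statement's English description precedes it below -/
import Mathlib

section
/- Let A ∈ M₃⊗M₃ be separable. Then P[A] ⊆ Q[A]; that is, every product vector z = x⊗y whose rank-one projection zz* lies in the smallest face V₁[A] satisfies x⊗y ∈ range A and x̄⊗y ∈ range A^Γ. -/
open Matrix BigOperators
open scoped ComplexOrder

/-- Index set for `M₃ ⊗ M₃ ≅ M₉`: pairs `(i,k)` with `i,k ∈ Fin 3`. -/
abbrev Idx : Type := Fin 3 × Fin 3

/-- `M₃ ⊗ M₃`, identified with 9×9 complex matrices. -/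
abbrev M9 : Type := Matrix Idx Idx ℂ

/-- Vectors in `ℂ³ ⊗ ℂ³ ≅ ℂ⁹`. -/
abbrev V9 : Type := Idx → ℂ

/-- The product vector `x ⊗ y`, with entries `(x⊗y)(i,k) = x i * y k`. -/
def prodVec (x y : Fin 3 → ℂ) : V9 := fun p => x p.1 * y p.2

/-- Entrywise complex conjugate of a vector in `ℂ³`. -/
def conjVec (x : Fin 3 → ℂ) : Fin 3 → ℂ := fun i => (starRingEnd ℂ) (x i)

/-- The rank-one matrix `z z*`. -/
def rankOne (z : V9) : M9 := Matrix.vecMulVec z (fun p => (starRingEnd ℂ) (z p))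

/-- The partial transpose: `A^Γ((i,k),(j,l)) = A((j,k),(i,l))`. -/
def ptrans (A : M9) : M9 := fun p q => A (q.1, p.2) (p.1, q.2)

/-- The range of a matrix `A`, as a subspace of `ℂ⁹`. -/
noncomputable def MatRange (A : M9) : Submodule ℂ V9 := LinearMap.range A.mulVecLin

/-- `A` is separable: a finite sum of `(x⊗y)(x⊗y)*` over product vectors. -/
def IsSep (A : M9) : Prop :=
  ∃ (n : ℕ) (x y : Fin n → Fin 3 → ℂ),
    A = ∑ ι : Fin n, rankOne (prodVec (x ι) (y ι))

/-- The convex cone `V₁` of all separable matrices. -/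
def V1 : Set M9 := {A | IsSep A}

/-- `A` is PPT: both `A` and `A^Γ` are positive semidefinite. -/
def IsPPT (A : M9) : Prop := A.PosSemidef ∧ (ptrans A).PosSemidef

/-- The convex cone `𝕋` of all PPT matrices. -/
def Tcone : Set M9 := {A | IsPPT A}

/-- `F` is a face of the convex set `C`. -/
def IsFaceOf (F C : Set M9) : Prop :=
  F ⊆ C ∧ Convex ℝ F ∧
    ∀ x ∈ C, ∀ y ∈ C, ∀ t : ℝ, 0 < t → t < 1 →
      (1 - t) • x + t • y ∈ F → x ∈ F ∧ y ∈ F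

/-- The smallest face of `C` containing `A`. -/
def smallestFace (C : Set M9) (A : M9) : Set M9 := ⋂₀ {F | IsFaceOf F C ∧ A ∈ F}

/-- `P[A]`: product vectors `z` with `z z* ∈ V₁[A]`. -/
def Pvecs (A : M9) : Set V9 :=
  {z | (∃ x y : Fin 3 → ℂ, z = prodVec x y) ∧ rankOne z ∈ smallestFace V1 A}

/-- `Q[A]`: product vectors `x⊗y` with `x⊗y ∈ range A` and `x̄⊗y ∈ range A^Γ`. -/
def Qvecs (A : M9) : Set V9 :=
  {z | ∃ x y : Fin 3 → ℂ, z = prodVec x y ∧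
    prodVec x y ∈ MatRange A ∧ prodVec (conjVec x) y ∈ MatRange (ptrans A)}

/-- The face `𝕋[A]` of the PPT cone determined by `A`. -/
def TFace (A : M9) : Set M9 :=
  {B | IsPPT B ∧ MatRange B ≤ MatRange A ∧ MatRange (ptrans B) ≤ MatRange (ptrans A)}

/-- `x` is an interior point of the convex set `C`. -/
def IsInteriorPt (x : M9) (C : Set M9) : Prop :=
  x ∈ C ∧ ∀ y ∈ C, ∃ t : ℝ, 1 < t ∧ (1 - t) • y + t • x ∈ C

/-- The matrix `A[a,b,c]` of the paper. -/
def Amat (a b c : ℝ) : M9 := fun p q =>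
  if p = q then
    (if p.1 = p.2 then (a : ℂ) else if p.2 = p.1 + 1 then (c : ℂ) else (b : ℂ))
  else if p.1 = p.2 ∧ q.1 = q.2 then 1 else 0

/-!
The separable `B` with `ker A ⊆ ker B` and `ker A^Γ ⊆ ker B^Γ` form a face of `V₁` containing `A`,
because `ker (s B + t C) = ker B ∩ ker C` for positive semidefinite `B, C` and `s, t > 0`. So
`V₁[A]` lies in this face. If `z z*` belongs to it then `z ⊥ ker A`, i.e. `z ∈ range A` as `A` is
Hermitian; and since `((x⊗y)(x⊗y)*)^Γ = (x̄⊗y)(x̄⊗y)*`, likewise `x̄⊗y ∈ range A^Γ`.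
-/

namespace Matrix

variable {n 𝕜 : Type*} [Fintype n] [RCLike 𝕜]

theorem PosSemidef.ker_mulVecLin_add {B C : Matrix n n 𝕜} (hB : B.PosSemidef)
    (hC : C.PosSemidef) :
    LinearMap.ker (B + C).mulVecLin = LinearMap.ker B.mulVecLin ⊓ LinearMap.ker C.mulVecLin := by
  ext u
  simp only [Submodule.mem_inf, LinearMap.mem_ker, mulVecLin_apply, add_mulVec]
  refine ⟨fun h => ?_, fun ⟨hBu, hCu⟩ => by rw [hBu, hCu, add_zero]⟩
  have hsum : star u ⬝ᵥ B *ᵥ u + star u ⬝ᵥ C *ᵥ u = 0 := by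
    rw [← dotProduct_add, h, dotProduct_zero]
  obtain ⟨hBu, hCu⟩ := (add_eq_zero_iff_of_nonneg (hB.dotProduct_mulVec_nonneg u)
    (hC.dotProduct_mulVec_nonneg u)).mp hsum
  exact ⟨(hB.dotProduct_mulVec_zero_iff u).mp hBu, (hC.dotProduct_mulVec_zero_iff u).mp hCu⟩

theorem ker_mulVecLin_smul {r : ℝ} (hr : r ≠ 0) (B : Matrix n n 𝕜) :
    LinearMap.ker (r • B).mulVecLin = LinearMap.ker B.mulVecLin := by
  ext u
  simp [hr]

theorem PosSemidef.ker_mulVecLin_smul_add_smul {B C : Matrix n n 𝕜} (hB : B.PosSemidef)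
    (hC : C.PosSemidef) {s t : ℝ} (hs : 0 < s) (ht : 0 < t) :
    LinearMap.ker (s • B + t • C).mulVecLin =
      LinearMap.ker B.mulVecLin ⊓ LinearMap.ker C.mulVecLin := by
  rw [(hB.smul hs.le).ker_mulVecLin_add (hC.smul ht.le), ker_mulVecLin_smul hs.ne',
    ker_mulVecLin_smul ht.ne']

theorem ker_mulVecLin_le_smul_add_smul {A B C : Matrix n n 𝕜}
    (hB : LinearMap.ker A.mulVecLin ≤ LinearMap.ker B.mulVecLin)
    (hC : LinearMap.ker A.mulVecLin ≤ LinearMap.ker C.mulVecLin) (s t : ℝ) :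
    LinearMap.ker A.mulVecLin ≤ LinearMap.ker (s • B + t • C).mulVecLin := by
  intro u hu
  simp [LinearMap.mem_ker.mp (hB hu), LinearMap.mem_ker.mp (hC hu)]

theorem IsHermitian.mem_range_mulVecLin [DecidableEq n] {A : Matrix n n 𝕜} (hA : A.IsHermitian)
    {z : n → 𝕜} (hz : ∀ u, A *ᵥ u = 0 → star z ⬝ᵥ u = 0) :
    z ∈ LinearMap.range A.mulVecLin := by
  have hT : (toEuclideanLin A).IsSymmetric := isSymmetric_toEuclideanLin_iff.mpr hA
  have hzT : WithLp.toLp 2 z ∈ LinearMap.range (toEuclideanLin A) := by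
    rw [← Submodule.orthogonal_orthogonal (LinearMap.range _), hT.orthogonal_range]
    intro u hu
    rw [EuclideanSpace.inner_eq_star_dotProduct, dotProduct_star, dotProduct_comm,
      hz u.ofLp (congrArg WithLp.ofLp hu), star_zero]
  obtain ⟨v, hv⟩ := hzT
  exact ⟨v.ofLp, congrArg WithLp.ofLp hv⟩

end Matrix

theorem rankOne_posSemidef (z : V9) : (rankOne z).PosSemidef :=
  posSemidef_vecMulVec_self_star z

theorem rankOne_mulVec_eq_zero_iff (z u : V9) : rankOne z *ᵥ u = 0 ↔ star z ⬝ᵥ u = 0 := by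
  rw [rankOne, show (fun p => (starRingEnd ℂ) (z p)) = star z from rfl, vecMulVec_mulVec]
  by_cases hz : z = 0 <;> simp [hz]

theorem mem_matRange_of_ker_le_ker_rankOne {A : M9} (hA : A.IsHermitian) {z : V9}
    (h : LinearMap.ker A.mulVecLin ≤ LinearMap.ker (rankOne z).mulVecLin) : z ∈ MatRange A :=
  hA.mem_range_mulVecLin fun u hu => (rankOne_mulVec_eq_zero_iff z u).mp (h hu)

theorem ptrans_add (B C : M9) : ptrans (B + C) = ptrans B + ptrans C := rfl

theorem ptrans_smul (r : ℝ) (B : M9) : ptrans (r • B) = r • ptrans B := rfl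

theorem ptrans_sum {ι : Type*} (s : Finset ι) (f : ι → M9) :
    ptrans (∑ i ∈ s, f i) = ∑ i ∈ s, ptrans (f i) := by
  ext p q
  simp [ptrans, Matrix.sum_apply]

theorem ptrans_rankOne_prodVec (x y : Fin 3 → ℂ) :
    ptrans (rankOne (prodVec x y)) = rankOne (prodVec (conjVec x) y) := by
  ext p q
  simp only [ptrans, rankOne, vecMulVec_apply, prodVec, conjVec, map_mul, Complex.conj_conj]
  ring

namespace IsSep

theorem posSemidef {A : M9} (hA : IsSep A) : A.PosSemidef := by
  obtain ⟨n, x, y, rfl⟩ := hA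
  exact posSemidef_sum _ fun i _ => rankOne_posSemidef _

theorem add {A B : M9} (hA : IsSep A) (hB : IsSep B) : IsSep (A + B) := by
  obtain ⟨n, x, y, rfl⟩ := hA
  obtain ⟨m, u, v, rfl⟩ := hB
  refine ⟨n + m, Fin.append x u, Fin.append y v, ?_⟩
  simp [Fin.sum_univ_add]

theorem smul {A : M9} (hA : IsSep A) {r : ℝ} (hr : 0 ≤ r) : IsSep (r • A) := by
  obtain ⟨n, x, y, rfl⟩ := hA
  refine ⟨n, fun ι i => (Real.sqrt r : ℂ) * x ι i, y, ?_⟩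
  rw [Finset.smul_sum]
  refine Finset.sum_congr rfl fun ι _ => ?_
  have hsq : (Real.sqrt r : ℂ) * (Real.sqrt r : ℂ) = (r : ℂ) := by
    rw [← Complex.ofReal_mul, Real.mul_self_sqrt hr]
  ext p q
  simp only [Matrix.smul_apply, rankOne, vecMulVec_apply, prodVec, map_mul, Complex.real_smul,
    Complex.conj_ofReal]
  linear_combination (x ι p.1 * y ι p.2 * (starRingEnd ℂ) (x ι q.1) * (starRingEnd ℂ) (y ι q.2)) *
    hsq.symm

theorem ptrans {A : M9} (hA : IsSep A) : IsSep (ptrans A) := by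
  obtain ⟨n, x, y, rfl⟩ := hA
  exact ⟨n, fun ι => conjVec (x ι), y, by simp only [ptrans_sum, ptrans_rankOne_prodVec]⟩

end IsSep

def kerFace (A : M9) : Set M9 :=
  {B | IsSep B ∧ LinearMap.ker A.mulVecLin ≤ LinearMap.ker B.mulVecLin ∧
    LinearMap.ker (ptrans A).mulVecLin ≤ LinearMap.ker (ptrans B).mulVecLin}

theorem kerFace_isFaceOf (A : M9) : IsFaceOf (kerFace A) V1 := by
  refine ⟨fun B hB => hB.1, ?_, ?_⟩
  · rintro B ⟨hB, hBker, hBkerΓ⟩ C ⟨hC, hCker, hCkerΓ⟩ a b ha hb -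
    refine ⟨(hB.smul ha).add (hC.smul hb), ker_mulVecLin_le_smul_add_smul hBker hCker a b, ?_⟩
    rw [ptrans_add, ptrans_smul, ptrans_smul]
    exact ker_mulVecLin_le_smul_add_smul hBkerΓ hCkerΓ a b
  · rintro B hB C hC t ht0 ht1 ⟨-, hker, hkerΓ⟩
    rw [hB.posSemidef.ker_mulVecLin_smul_add_smul hC.posSemidef (sub_pos.mpr ht1) ht0] at hker
    rw [ptrans_add, ptrans_smul, ptrans_smul, hB.ptrans.posSemidef.ker_mulVecLin_smul_add_smul
      hC.ptrans.posSemidef (sub_pos.mpr ht1) ht0] at hkerΓ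
    exact ⟨⟨hB, hker.trans inf_le_left, hkerΓ.trans inf_le_left⟩,
      ⟨hC, hker.trans inf_le_right, hkerΓ.trans inf_le_right⟩⟩

theorem smallestFace_subset_kerFace {A : M9} (hA : IsSep A) : smallestFace V1 A ⊆ kerFace A :=
  Set.sInter_subset_of_mem ⟨kerFace_isFaceOf A, hA, le_rfl, le_rfl⟩

/-- For separable `A`, `P[A] ⊆ Q[A]`. -/
theorem stmt0 (A : M9) (hA : IsSep A) : Pvecs A ⊆ Qvecs A := by
  rintro z ⟨⟨x, y, rfl⟩, hz⟩
  obtain ⟨-, hker, hkerΓ⟩ := smallestFace_subset_kerFace hA hz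
  rw [ptrans_rankOne_prodVec] at hkerΓ
  exact ⟨x, y, rfl, mem_matRange_of_ker_le_ker_rankOne hA.posSemidef.1 hker,
    mem_matRange_of_ker_le_ker_rankOne hA.ptrans.posSemidef.1 hkerΓ⟩
end

section
/- Let A ∈ M₃⊗M₃ be separable. Then the linear span of the set of partial conjugates {x̄⊗y : x⊗y ∈ P[A]} equals the range of the partial transpose A^Γ. -/
open Matrix BigOperators
open scoped ComplexOrder

/-!
Write `A = ∑ zᵢ zᵢ*` with `zᵢ = xᵢ ⊗ yᵢ`, so that `A^Γ = ∑ wᵢ wᵢ*` with `wᵢ = x̄ᵢ ⊗ yᵢ`. A Gram sum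
`∑ vⱼ vⱼ*` is `V Vᴴ` for the matrix `V` with columns `vⱼ`, and `V Vᴴ` has the range of `V` since the
two have the same rank; so `range A^Γ = span {wᵢ}`. Each `zᵢ zᵢ*` is a summand of `A` inside the cone
`V₁`, hence lies in every face containing `A`, so the `wᵢ` are partial conjugates of vectors of `P[A]`.
Conversely, the separable `B` with `B + C = r A` for some separable `C` and real `r` form a face of
`V₁` containing `A`. So `x ⊗ y ∈ P[A]` gives `(x⊗y)(x⊗y)* + C = r A`, and after partial
transposition `x̄ ⊗ y` is one of the Gram vectors of `r A^Γ`, hence lies in its range.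
-/

theorem Matrix.range_mulVecLin_mul_conjTranspose {m n R : Type*} [Fintype m] [Fintype n]
    [Field R] [PartialOrder R] [StarRing R] [StarOrderedRing R] (M : Matrix m n R) :
    LinearMap.range (M * Mᴴ).mulVecLin = LinearMap.range M.mulVecLin := by
  have hle : LinearMap.range (M * Mᴴ).mulVecLin ≤ LinearMap.range M.mulVecLin := by
    rw [mulVecLin_mul]
    exact LinearMap.range_comp_le_range _ _
  exact Submodule.eq_of_le_of_finrank_eq hle (rank_self_mul_conjTranspose M)

theorem sum_rankOne_eq_mul_conjTranspose {ι : Type*} [Fintype ι] (v : ι → V9) :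
    ∑ j, rankOne (v j) = Matrix.of (fun p j => v j p) * (Matrix.of fun p j => v j p)ᴴ := by
  ext p q
  simp [rankOne, mul_apply, Matrix.sum_apply, vecMulVec_apply]

theorem matRange_sum_rankOne {ι : Type*} [Fintype ι] (v : ι → V9) :
    MatRange (∑ j, rankOne (v j)) = Submodule.span ℂ (Set.range v) := by
  rw [MatRange, sum_rankOne_eq_mul_conjTranspose, range_mulVecLin_mul_conjTranspose,
    range_mulVecLin]
  rfl

theorem matRange_real_smul_le (r : ℝ) (M : M9) : MatRange (r • M) ≤ MatRange M := by
  rintro _ ⟨u, rfl⟩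
  exact ⟨r • u, by simp⟩

theorem ptrans_real_smul (r : ℝ) (M : M9) : ptrans (r • M) = r • ptrans M := rfl

theorem matRange_ptrans_sum_rankOne_prodVec {n : ℕ} (x y : Fin n → Fin 3 → ℂ) :
    MatRange (ptrans (∑ ι, rankOne (prodVec (x ι) (y ι)))) =
      Submodule.span ℂ (Set.range fun ι => prodVec (conjVec (x ι)) (y ι)) := by
  simp only [ptrans_sum, ptrans_rankOne_prodVec, matRange_sum_rankOne]

theorem isSep_zero : IsSep 0 := ⟨0, ![], ![], by simp⟩

theorem isSep_rankOne_prodVec (x y : Fin 3 → ℂ) : IsSep (rankOne (prodVec x y)) :=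
  ⟨1, ![x], ![y], by simp⟩

theorem IsSep.add_s2 {A B : M9} (hA : IsSep A) (hB : IsSep B) : IsSep (A + B) := by
  obtain ⟨n, x, y, rfl⟩ := hA
  obtain ⟨m, x', y', rfl⟩ := hB
  exact ⟨n + m, Fin.append x x', Fin.append y y', by simp [Fin.sum_univ_add]⟩

theorem real_smul_rankOne_prodVec {c : ℝ} (hc : 0 ≤ c) (x y : Fin 3 → ℂ) :
    c • rankOne (prodVec x y) = rankOne (prodVec ((√c : ℂ) • x) y) := by
  have hsq : (√c : ℂ) * √c = c := by exact_mod_cast Real.mul_self_sqrt hc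
  ext p q
  simp only [rankOne, prodVec, vecMulVec_apply, Matrix.smul_apply, Pi.smul_apply, smul_eq_mul,
    map_mul, Complex.conj_ofReal, Complex.real_smul]
  rw [← hsq]
  ring

theorem IsSep.smul_s2 {A : M9} (hA : IsSep A) {c : ℝ} (hc : 0 ≤ c) : IsSep (c • A) := by
  obtain ⟨n, x, y, rfl⟩ := hA
  simp only [Finset.smul_sum, real_smul_rankOne_prodVec hc]
  exact ⟨n, _, y, rfl⟩

def sepCone : PointedCone ℝ M9 where
  carrier := V1
  add_mem' := IsSep.add_s2
  zero_mem' := isSep_zero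
  smul_mem' c _ hB := IsSep.smul_s2 hB c.2

section Face

variable {K : PointedCone ℝ M9}

theorem smallestFace_subset {C F : Set M9} {A : M9} (hF : IsFaceOf F C) (hA : A ∈ F) :
    smallestFace C A ⊆ F :=
  Set.sInter_subset_of_mem ⟨hF, hA⟩

theorem IsFaceOf.mem_of_add_mem {F : Set M9} (hF : IsFaceOf F K) {B C : M9}
    (hBC : B + C ∈ F) (hB : B ∈ K) (hC : C ∈ K) : B ∈ F := by
  have two_smul_mem {D : M9} (hD : D ∈ K) : (2 : ℝ) • D ∈ K := K.smul_mem (by norm_num) hD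
  have hzero_mem : (0 : M9) ∈ F ∧ (2 : ℝ) • (B + C) ∈ F := by
    refine hF.2.2 0 K.zero_mem _ (two_smul_mem (hF.1 hBC)) (1 / 2) (by norm_num) (by norm_num) ?_
    convert hBC using 1
    module
  have htwo : (2 : ℝ) • B ∈ F ∧ (2 : ℝ) • C ∈ F := by
    refine hF.2.2 _ (two_smul_mem hB) _ (two_smul_mem hC) (1 / 2) (by norm_num) (by norm_num) ?_
    convert hBC using 1
    module
  convert hF.2.1 hzero_mem.1 htwo.1 (by norm_num : (0 : ℝ) ≤ 1 / 2) (by norm_num : (0 : ℝ) ≤ 1 / 2)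
    (by norm_num) using 1
  module

theorem mem_smallestFace_of_add {B C : M9} (hB : B ∈ K) (hC : C ∈ K) :
    B ∈ smallestFace K (B + C) :=
  Set.mem_sInter.2 fun _ ⟨hF, hBC⟩ => hF.mem_of_add_mem hBC hB hC

def dominatedBy (K : PointedCone ℝ M9) (A : M9) : Set M9 :=
  {B | B ∈ K ∧ ∃ r : ℝ, ∃ C ∈ K, B + C = r • A}

theorem mem_dominatedBy_of_smul_add {A B C : M9} {a r : ℝ} (ha : 0 < a) (hB : B ∈ K)
    (hC : C ∈ K) (h : a • B + C = r • A) : B ∈ dominatedBy K A := by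
  refine ⟨hB, a⁻¹ * r, a⁻¹ • C, K.smul_mem (inv_nonneg.2 ha.le) hC, ?_⟩
  rw [mul_smul, ← h, smul_add, smul_smul, inv_mul_cancel₀ ha.ne', one_smul]

theorem isFaceOf_dominatedBy (A : M9) : IsFaceOf (dominatedBy K A) K := by
  refine ⟨fun B hB => hB.1, ?convex, ?face⟩
  case convex =>
    rintro B₁ ⟨hB₁, r₁, C₁, hC₁, h₁⟩ B₂ ⟨hB₂, r₂, C₂, hC₂, h₂⟩ a b ha hb hab
    refine ⟨K.convex hB₁ hB₂ ha hb hab, a * r₁ + b * r₂, a • C₁ + b • C₂,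
      K.add_mem (K.smul_mem ha hC₁) (K.smul_mem hb hC₂), ?_⟩
    linear_combination (norm := module) a • h₁ + b • h₂
  case face =>
    rintro B hB B' hB' t ht₀ ht₁ ⟨-, r, C, hC, h⟩
    have hcomb (D : M9) (hD : D ∈ K) (s : ℝ) (hs : 0 ≤ s) : s • D + C ∈ K :=
      K.add_mem (K.smul_mem hs hD) hC
    exact ⟨mem_dominatedBy_of_smul_add (sub_pos.2 ht₁) hB (hcomb B' hB' t ht₀.le)
        (by rw [← h]; abel),
      mem_dominatedBy_of_smul_add ht₀ hB' (hcomb B hB (1 - t) (sub_pos.2 ht₁).le)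
        (by rw [← h]; abel)⟩

theorem smallestFace_subset_dominatedBy {A : M9} (hA : A ∈ K) :
    smallestFace K A ⊆ dominatedBy K A :=
  smallestFace_subset (isFaceOf_dominatedBy A) ⟨hA, 1, 0, K.zero_mem, by simp⟩

end Face

theorem conjVec_prodVec_mem_matRange_ptrans {B : M9} (hB : IsSep B) (x y : Fin 3 → ℂ) :
    prodVec (conjVec x) y ∈ MatRange (ptrans (rankOne (prodVec x y) + B)) := by
  obtain ⟨m, x', y', rfl⟩ := hB
  have hcons : rankOne (prodVec x y) + ∑ κ, rankOne (prodVec (x' κ) (y' κ)) =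
      ∑ κ : Fin (m + 1), rankOne (prodVec (vecCons x x' κ) (vecCons y y' κ)) := by
    simp [Fin.sum_univ_succ]
  rw [hcons, matRange_ptrans_sum_rankOne_prodVec]
  exact Submodule.subset_span ⟨0, rfl⟩

/-- For separable `A`, the span of the partial conjugates of `P[A]`
equals the range of `A^Γ`. -/
theorem stmt2 (A : M9) (hA : IsSep A) :
    Submodule.span ℂ
        {w : V9 | ∃ x y : Fin 3 → ℂ, prodVec x y ∈ Pvecs A ∧ w = prodVec (conjVec x) y} =
      MatRange (ptrans A) := by
  apply le_antisymm
  · refine Submodule.span_le.2 ?_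
    rintro _ ⟨x, y, ⟨-, hface⟩, rfl⟩
    obtain ⟨-, r, C, hC, hsum⟩ := smallestFace_subset_dominatedBy (K := sepCone) hA hface
    have hmem := conjVec_prodVec_mem_matRange_ptrans hC x y
    rw [hsum, ptrans_real_smul] at hmem
    exact matRange_real_smul_le r _ hmem
  · obtain ⟨n, x, y, rfl⟩ := hA
    rw [matRange_ptrans_sum_rankOne_prodVec, Submodule.span_le]
    rintro _ ⟨ι, rfl⟩
    refine Submodule.subset_span ⟨x ι, y ι, ⟨⟨_, _, rfl⟩, ?_⟩, rfl⟩
    rw [← Finset.add_sum_erase _ _ (Finset.mem_univ ι)]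
    exact mem_smallestFace_of_add (K := sepCone) (isSep_rankOne_prodVec _ _)
      (sum_mem fun κ _ => isSep_rankOne_prodVec _ _)
end

section
/- For nonnegative reals a, b, c, the matrix A[a,b,c] is PPT (i.e. both A[a,b,c] and its partial transpose A[a,b,c]^Γ are positive semidefinite) if and only if a ≥ 1 and bc ≥ 1. -/
open Matrix BigOperators
open scoped ComplexOrder

/-!
`A[a,b,c]` is the diagonal matrix with entries `a - 1`, `c`, `b` (at `(i,i)`, `(i,i+1)`,
`(i+1,i)`) plus `e e*` for `e = ∑ᵢ eᵢ ⊗ eᵢ`. Its partial transpose is `a` at the `(i,i)` and,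
on each `span{eᵢ ⊗ eᵢ₊₁, eᵢ₊₁ ⊗ eᵢ}`, the block `[[c, 1], [1, b]]`. Necessity comes from
`2 × 2` principal minors; for sufficiency, `[[c, 1], [1, b]] = c v v* + diag(0, b - c⁻¹)`
with `v = (1, c⁻¹)`.
-/

namespace Matrix.PosSemidef

variable {n 𝕜 : Type*} [RCLike 𝕜] {A : Matrix n n 𝕜}

theorem apply_mul_apply_le_diag_mul_diag (hA : A.PosSemidef) (p q : n) :
    A p q * A q p ≤ A p p * A q q := by
  have h := (hA.submatrix ![p, q]).det_nonneg
  rw [det_fin_two] at h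
  simpa [sub_nonneg] using h

end Matrix.PosSemidef

lemma Amat_eq_diagonal_add_vecMulVec (a b c : ℝ) :
    Amat a b c =
      diagonal (fun p : Idx =>
        ((if p.1 = p.2 then a - 1 else if p.2 = p.1 + 1 then c else b : ℝ) : ℂ)) +
      vecMulVec (fun p : Idx => if p.1 = p.2 then 1 else 0)
        (star fun p : Idx => if p.1 = p.2 then 1 else 0) := by
  ext ⟨i, k⟩ ⟨j, l⟩
  fin_cases i <;> fin_cases k <;> fin_cases j <;> fin_cases l <;>
    simp [Amat, vecMulVec, diagonal]

lemma ptrans_Amat_eq_diagonal_add_sum (a b c : ℝ) (hc : c ≠ 0) :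
    ptrans (Amat a b c) =
      diagonal (fun p : Idx =>
        ((if p.1 = p.2 then a else if p.2 = p.1 + 1 then 0 else b - c⁻¹ : ℝ) : ℂ)) +
      ∑ i : Fin 3, c •
        vecMulVec (Pi.single (i, i + 1) 1 + (c⁻¹ : ℂ) • Pi.single (i + 1, i) 1)
          (star (Pi.single (i, i + 1) 1 + (c⁻¹ : ℂ) • Pi.single (i + 1, i) 1)) := by
  have hc' : (c : ℂ) ≠ 0 := by exact_mod_cast hc
  ext ⟨i, k⟩ ⟨j, l⟩
  simp only [ptrans, Amat, Matrix.add_apply, diagonal_apply, Matrix.sum_apply, Matrix.smul_apply,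
    vecMulVec_apply, Pi.add_apply, Pi.smul_apply, Pi.star_apply, Pi.single_apply, Prod.ext_iff]
  fin_cases i <;> fin_cases k <;> fin_cases j <;> fin_cases l <;>
    simp [Fin.sum_univ_three, hc']

section Amat

variable {a b c : ℝ}

lemma one_le_of_posSemidef_Amat (h : (Amat a b c).PosSemidef) : 1 ≤ a := by
  have hminor := h.apply_mul_apply_le_diag_mul_diag (0, 0) (1, 1)
  have hdiag := h.diag_nonneg (i := (0, 0))
  norm_num [Amat] at hminor hdiag
  norm_cast at hminor hdiag
  nlinarith

lemma one_le_mul_of_posSemidef_ptrans_Amat (h : (ptrans (Amat a b c)).PosSemidef) :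
    1 ≤ b * c := by
  have hminor := h.apply_mul_apply_le_diag_mul_diag (0, 1) (1, 0)
  norm_num [ptrans, Amat, show (0 : Fin 3) ≠ 1 + 1 by decide] at hminor
  exact_mod_cast hminor.trans_eq (mul_comm _ _)

lemma posSemidef_Amat (ha : 1 ≤ a) (hb : 0 ≤ b) (hc : 0 ≤ c) : (Amat a b c).PosSemidef := by
  rw [Amat_eq_diagonal_add_vecMulVec]
  refine (PosSemidef.diagonal fun p => ?_).add (posSemidef_vecMulVec_self_star _)
  exact Complex.zero_le_real.mpr (by split_ifs <;> linarith)

lemma posSemidef_ptrans_Amat (ha : 0 ≤ a) (hc : 0 < c) (hbc : 1 ≤ b * c) :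
    (ptrans (Amat a b c)).PosSemidef := by
  have hb : c⁻¹ ≤ b := by rwa [inv_le_iff_one_le_mul₀' hc, mul_comm]
  rw [ptrans_Amat_eq_diagonal_add_sum a b c hc.ne']
  refine (PosSemidef.diagonal fun p => ?_).add
    (posSemidef_sum _ fun i _ => (posSemidef_vecMulVec_self_star _).smul hc.le)
  exact Complex.zero_le_real.mpr (by split_ifs <;> linarith)

end Amat

theorem stmt5_general (a b c : ℝ) (hc : 0 ≤ c) :
    IsPPT (Amat a b c) ↔ 1 ≤ a ∧ 1 ≤ b * c := by
  refine ⟨fun h => ⟨one_le_of_posSemidef_Amat h.1, one_le_mul_of_posSemidef_ptrans_Amat h.2⟩,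
    fun ⟨ha, hbc⟩ => ?_⟩
  have hc : 0 < c := hc.lt_of_ne (by rintro rfl; simp at hbc; linarith)
  have hb : 0 ≤ b := by nlinarith
  exact ⟨posSemidef_Amat ha hb hc.le, posSemidef_ptrans_Amat (by linarith) hc hbc⟩

/-- `A[a,b,c]` is PPT iff `a ≥ 1` and `bc ≥ 1`. -/
theorem stmt5 (a b c : ℝ) (ha : 0 ≤ a) (hb : 0 ≤ b) (hc : 0 ≤ c) :
    IsPPT (Amat a b c) ↔ 1 ≤ a ∧ 1 ≤ b * c :=
  stmt5_general a b c hc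
end

section
/- For every b > 0, the matrix A[2, b, 1/b] admits the decomposition A[2, b, 1/b] = (1/(3b)) ∑_{i=1}^{3} ∑_{ω ∈ Ω} z_i(ω) z_i(ω)*, where Ω is the set of third roots of unity; in particular A[2, b, 1/b] is separable. -/
open Matrix BigOperators
open scoped ComplexOrder

/-- `Ω = {1, e^{2πi/3}, e^{-2πi/3}}`, the third roots of unity, as a triple. -/
noncomputable def Om : Fin 3 → ℂ :=
  ![1, Complex.exp (((2 * Real.pi / 3 : ℝ) : ℂ) * Complex.I),
      Complex.exp (-(((2 * Real.pi / 3 : ℝ) : ℂ) * Complex.I))]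

/-- The product vectors `z₁(ω), z₂(ω), z₃(ω)`. -/
noncomputable def zvec (b : ℝ) : Fin 3 → ℂ → V9 :=
  ![fun ω => prodVec ![0, 1, (Real.sqrt b : ℂ) * ω] ![0, (Real.sqrt b : ℂ), star ω],
    fun ω => prodVec ![(Real.sqrt b : ℂ) * ω, 0, 1] ![star ω, 0, (Real.sqrt b : ℂ)],
    fun ω => prodVec ![1, (Real.sqrt b : ℂ) * ω, 0] ![(Real.sqrt b : ℂ), star ω, 0]]

/-! For `ω ∈ Ω`, `zᵢ(ω) = uᵢ + ω̄ vᵢ + ω wᵢ` with fixed vectors `uᵢ, vᵢ, wᵢ`. In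
`∑_{ω ∈ Ω} zᵢ(ω) zᵢ(ω)*` every cross term carries one of `ω, ω̄, ω², ω̄²`, whose sums over the
third roots of unity vanish, so the sum is `3 (uᵢuᵢ* + vᵢvᵢ* + wᵢwᵢ*)`. Scaled by `1/b`, these
nine rank-one matrices add up to `A[2, b, 1/b]`, and separability follows because the `zᵢ(ω)`
are product vectors. -/

theorem sum_vecMulVec_star_of_phases {ι n : Type*} [Fintype ι] (ω : ι → ℂ)
    (hsum : ∑ j, ω j = 0) (hsq : ∑ j, ω j ^ 2 = 0) (hunit : ∀ j, ω j * star (ω j) = 1)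
    (u v w : n → ℂ) :
    ∑ j, vecMulVec (u + star (ω j) • v + ω j • w) (star (u + star (ω j) • v + ω j • w)) =
      (Fintype.card ι : ℂ) •
        (vecMulVec u (star u) + vecMulVec v (star v) + vecMulVec w (star w)) := by
  have hsum' : ∑ j, star (ω j) = 0 := by rw [← star_sum, hsum, star_zero]
  have hsq' : ∑ j, star (ω j) ^ 2 = 0 := by simp_rw [← star_pow]; rw [← star_sum, hsq, star_zero]
  ext p q
  have hterm : ∀ j, (u p + star (ω j) * v p + ω j * w p) *
      (star (u q) + ω j * star (v q) + star (ω j) * star (w q)) =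
      (u p * star (u q) + v p * star (v q) + w p * star (w q)) +
        ω j * (u p * star (v q) + w p * star (u q)) +
        star (ω j) * (u p * star (w q) + v p * star (u q)) +
        star (ω j) ^ 2 * (v p * star (w q)) + ω j ^ 2 * (w p * star (v q)) := fun j => by
    linear_combination (v p * star (v q) + w p * star (w q)) * hunit j
  simp only [Matrix.sum_apply, Matrix.smul_apply, Matrix.add_apply, vecMulVec_apply, Pi.add_apply,
    Pi.smul_apply, Pi.star_apply, star_add, star_smul, star_star, smul_eq_mul, hterm,
    Finset.sum_add_distrib, ← Finset.sum_mul, hsum, hsq, hsum', hsq', Finset.sum_const, Finset.card_univ, nsmul_eq_mul]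
  ring

theorem isPrimitiveRoot_Om_one : IsPrimitiveRoot (Om 1) 3 := by
  convert Complex.isPrimitiveRoot_exp 3 (by norm_num) using 1
  simp only [Om, Matrix.cons_val_one, Matrix.cons_val_zero]
  congr 1
  push_cast
  ring

theorem Om_eq_pow (j : Fin 3) : Om j = Om 1 ^ (j : ℕ) := by
  have h3 := isPrimitiveRoot_Om_one.pow_eq_one
  have hinv : Om 2 * Om 1 = 1 := by
    simp only [Om, Matrix.cons_val_one, Matrix.cons_val_zero, Matrix.cons_val_two,
      Matrix.tail_cons, Matrix.head_cons, ← Complex.exp_add, neg_add_cancel, Complex.exp_zero]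
  fin_cases j
  · rfl
  · exact (pow_one _).symm
  · show Om 2 = Om 1 ^ 2
    linear_combination Om 1 ^ 2 * hinv - Om 2 * h3

theorem sum_Om_pow {k : ℕ} (hk : k.Coprime 3) : ∑ j, Om j ^ k = 0 := by
  calc ∑ j : Fin 3, Om j ^ k = ∑ i ∈ Finset.range 3, (Om 1 ^ k) ^ i := by
        rw [← Fin.sum_univ_eq_sum_range]
        refine Finset.sum_congr rfl fun j _ => ?_
        rw [Om_eq_pow, ← pow_mul, mul_comm, pow_mul]
    _ = 0 := (isPrimitiveRoot_Om_one.pow_of_coprime k hk).geom_sum_eq_zero (by norm_num)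

theorem Om_mul_star (j : Fin 3) : Om j * star (Om j) = 1 := by
  have h3 : Om j ^ 3 = 1 := by
    rw [Om_eq_pow, ← pow_mul, mul_comm, pow_mul, isPrimitiveRoot_Om_one.pow_eq_one, one_pow]
  rw [Complex.star_def, Complex.mul_conj, Complex.normSq_eq_norm_sq,
    Complex.norm_eq_one_of_pow_eq_one h3 (by norm_num)]
  norm_num

theorem rankOne_eq_vecMulVec (z : V9) : rankOne z = vecMulVec z (star z) := rfl

/- With `a = i + 1`, `c = i + 2`, `zᵢ(ω) = (e_a + √b ω e_c) ⊗ (√b e_a + ω̄ e_c)`; for `|ω| = 1`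
these are its coefficients of `1`, `ω̄` and `ω`. -/
noncomputable def zvecConst (b : ℝ) (i : Fin 3) : V9 :=
  (Real.sqrt b : ℂ) • (prodVec (Pi.single (i + 1) 1) (Pi.single (i + 1) 1) +
    prodVec (Pi.single (i + 2) 1) (Pi.single (i + 2) 1))

def zvecConj (i : Fin 3) : V9 := prodVec (Pi.single (i + 1) 1) (Pi.single (i + 2) 1)

def zvecLin (b : ℝ) (i : Fin 3) : V9 :=
  (b : ℂ) • prodVec (Pi.single (i + 2) 1) (Pi.single (i + 1) 1)

theorem zvec_eq_add {b : ℝ} (hb : 0 ≤ b) (i : Fin 3) {ω : ℂ} (hω : ω * star ω = 1) :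
    zvec b i ω = zvecConst b i + star ω • zvecConj i + ω • zvecLin b i := by
  have hs : (Real.sqrt b : ℂ) * Real.sqrt b = b := by exact_mod_cast Real.mul_self_sqrt hb
  rw [Complex.star_def] at hω
  ext ⟨p, q⟩
  fin_cases i <;> fin_cases p <;> fin_cases q <;>
    simp [zvec, zvecConst, zvecConj, zvecLin, prodVec] <;>
    first | linear_combination ω * hs | linear_combination (Real.sqrt b : ℂ) * hω

theorem sum_rankOne_zvec_Om {b : ℝ} (hb : 0 ≤ b) (i : Fin 3) :
    ∑ j, rankOne (zvec b i (Om j)) =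
      (3 : ℂ) • (rankOne (zvecConst b i) + rankOne (zvecConj i) + rankOne (zvecLin b i)) := by
  simp_rw [zvec_eq_add hb i (Om_mul_star _)]
  simpa only [rankOne_eq_vecMulVec, Fintype.card_fin, Nat.cast_ofNat] using
    sum_vecMulVec_star_of_phases Om (by simpa using sum_Om_pow (k := 1) (by norm_num))
      (sum_Om_pow (by norm_num)) Om_mul_star (zvecConst b i) (zvecConj i) (zvecLin b i)

theorem Amat_two_eq_sum_rankOne {b : ℝ} (hb : 0 < b) :
    Amat 2 b (1 / b) = ((1 / b : ℝ) : ℂ) •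
      ∑ i, (rankOne (zvecConst b i) + rankOne (zvecConj i) + rankOne (zvecLin b i)) := by
  have hs : (Real.sqrt b : ℂ) * Real.sqrt b = b := by exact_mod_cast Real.mul_self_sqrt hb.le
  have hb0 : (b : ℂ) ≠ 0 := by exact_mod_cast hb.ne'
  ext p q
  simp only [Matrix.smul_apply, Fin.sum_univ_three, Matrix.add_apply, rankOne,
    vecMulVec_apply, zvecConst, zvecConj, zvecLin, prodVec, Pi.smul_apply, Pi.add_apply]
  fin_cases p <;> fin_cases q <;>
    simp [Amat, hs] <;> field_simp <;> ring

theorem prodVec_smul_left (c : ℂ) (x y : Fin 3 → ℂ) : prodVec (c • x) y = c • prodVec x y := by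
  ext p
  simp [prodVec, mul_assoc]

theorem rankOne_ofReal_smul (r : ℝ) (z : V9) :
    rankOne ((r : ℂ) • z) = ((r ^ 2 : ℝ) : ℂ) • rankOne z := by
  ext p q
  simp only [rankOne, vecMulVec_apply, Pi.smul_apply, smul_eq_mul, map_mul, Complex.conj_ofReal,
    Matrix.smul_apply]
  push_cast
  ring

theorem IsSep.ofReal_smul {A : M9} (hA : IsSep A) {r : ℝ} (hr : 0 ≤ r) : IsSep ((r : ℂ) • A) := by
  obtain ⟨n, x, y, rfl⟩ := hA
  refine ⟨n, fun ι => (Real.sqrt r : ℂ) • x ι, y, ?_⟩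
  simp only [prodVec_smul_left, rankOne_ofReal_smul, Real.sq_sqrt hr, Finset.smul_sum]

theorem isSep_sum_rankOne {ι : Type*} [Fintype ι] (z : ι → V9)
    (hz : ∀ i, ∃ x y, z i = prodVec x y) : IsSep (∑ i, rankOne (z i)) := by
  choose x y hxy using hz
  let e := Fintype.equivFin ι
  refine ⟨Fintype.card ι, x ∘ e.symm, y ∘ e.symm, ?_⟩
  rw [← e.symm.sum_comp]
  simp only [Function.comp_apply, hxy]

theorem exists_zvec_eq_prodVec (b : ℝ) (i : Fin 3) (ω : ℂ) : ∃ x y, zvec b i ω = prodVec x y := by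
  fin_cases i <;> exact ⟨_, _, rfl⟩

/-- `A[2,b,1/b] = (1/3b) ∑_{i=1}^{3} ∑_{ω ∈ Ω} zᵢ(ω)zᵢ(ω)*`;
in particular it is separable. -/
theorem stmt8 (b : ℝ) (hb : 0 < b) :
    (Amat 2 b (1 / b) =
        ((1 / (3 * b) : ℝ) : ℂ) • ∑ i : Fin 3, ∑ j : Fin 3, rankOne (zvec b i (Om j))) ∧
    IsSep (Amat 2 b (1 / b)) := by
  have hdecomp : Amat 2 b (1 / b) =
      ((1 / (3 * b) : ℝ) : ℂ) • ∑ i : Fin 3, ∑ j : Fin 3, rankOne (zvec b i (Om j)) := by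
    have hc : ((1 / (3 * b) : ℝ) : ℂ) * 3 = ((1 / b : ℝ) : ℂ) := by push_cast; field_simp
    simp_rw [Amat_two_eq_sum_rankOne hb, sum_rankOne_zvec_Om hb.le, ← Finset.smul_sum, smul_smul,
      hc]
  have hsep := isSep_sum_rankOne (fun p : Fin 3 × Fin 3 => zvec b p.1 (Om p.2))
    fun p => exists_zvec_eq_prodVec b p.1 (Om p.2)
  simp only [Fintype.sum_prod_type] at hsep
  exact ⟨hdecomp, hdecomp ▸ hsep.ofReal_smul (by positivity)⟩
end

section
/- For nonzero vectors x, y ∈ ℂ³, the product vector x⊗y lies in the range of A[1,1,1] and its partial conjugate x̄⊗y lies in the range of A[1,1,1]^Γ if and only if y is a nonzero scalar multiple of x̄ and |x₁| = |x₂| = |x₃|. -/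
/-!
On the diagonal vectors `e_i ⊗ e_i` the matrix `A[1,1,1]` acts as the all-ones matrix, and it is
the identity on the other basis vectors; so its range consists of the `z` with
`z(0,0) = z(1,1) = z(2,2)`. Its partial transpose is the identity on the diagonal vectors and the
all-ones `2 × 2` block on each pair `e_i ⊗ e_k`, `e_k ⊗ e_i`, so its range is the symmetric tensors.
Now `x̄ ⊗ y` is symmetric exactly when `y = c x̄`, and then `(x ⊗ y)(i,i) = c |x_i|²`.
-/

open Matrix BigOperators
open scoped ComplexOrder

theorem exists_eq_smul_of_forall_mul_eq_mul {ι K : Type*} [Field K] {u v : ι → K} (hu : u ≠ 0)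
    (h : ∀ i k, u i * v k = u k * v i) : ∃ c : K, v = c • u := by
  obtain ⟨j, hj⟩ := Function.ne_iff.mp hu
  refine ⟨v j / u j, funext fun k => ?_⟩
  rw [Pi.smul_apply, smul_eq_mul, div_mul_eq_mul_div, eq_div_iff hj]
  linear_combination h j k

theorem Fin.forall_forall_eq_iff_three {α : Type*} (f : Fin 3 → α) :
    (∀ i j, f i = f j) ↔ f 0 = f 1 ∧ f 1 = f 2 := by
  refine ⟨fun h => ⟨h 0 1, h 1 2⟩, fun ⟨h01, h12⟩ i j => ?_⟩
  fin_cases i <;> fin_cases j <;> simp [h01, h12]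

lemma conjVec_ne_zero {x : Fin 3 → ℂ} (hx : x ≠ 0) : conjVec x ≠ 0 := by
  contrapose! hx
  funext i
  simpa [conjVec] using congrFun hx i

lemma Amat_one_mulVec (w : V9) :
    Amat 1 1 1 *ᵥ w = fun p => if p.1 = p.2 then ∑ i, w (i, i) else w p := by
  ext ⟨i, k⟩
  fin_cases i <;> fin_cases k <;>
    simp [mulVec, dotProduct, Amat, Fintype.sum_prod_type, Fin.sum_univ_three]

lemma ptrans_Amat_one_mulVec (w : V9) :
    ptrans (Amat 1 1 1) *ᵥ w = fun p => if p.1 = p.2 then w p else w p + w p.swap := by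
  ext ⟨i, k⟩
  fin_cases i <;> fin_cases k <;>
    simp [mulVec, dotProduct, Amat, ptrans, Fintype.sum_prod_type, Fin.sum_univ_three] <;> ring

lemma mem_range_Amat_one_iff (z : V9) :
    z ∈ MatRange (Amat 1 1 1) ↔ ∀ i j, z (i, i) = z (j, j) := by
  constructor
  · rintro ⟨w, rfl⟩ i j
    simp [Amat_one_mulVec]
  · intro h
    refine ⟨fun p => if p.1 = p.2 then z (0, 0) / 3 else z p, funext fun p => ?_⟩
    obtain ⟨i, k⟩ := p
    by_cases hik : i = k
    · subst hik
      simp [Amat_one_mulVec, h i 0, mul_div_cancel₀]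
    · simp [Amat_one_mulVec, hik]

lemma mem_range_ptrans_Amat_one_iff (z : V9) :
    z ∈ MatRange (ptrans (Amat 1 1 1)) ↔ ∀ i k, z (i, k) = z (k, i) := by
  constructor
  · rintro ⟨w, rfl⟩ i k
    by_cases hik : i = k
    · rw [hik]
    · simp [ptrans_Amat_one_mulVec, hik, Ne.symm hik, add_comm]
  · intro h
    refine ⟨fun p => if p.1 = p.2 then z p else z p / 2, funext fun p => ?_⟩
    obtain ⟨i, k⟩ := p
    by_cases hik : i = k
    · simp [ptrans_Amat_one_mulVec, hik]
    · simp [ptrans_Amat_one_mulVec, hik, Ne.symm hik, h k i]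

lemma prodVec_smul_conjVec_self (x : Fin 3 → ℂ) (c : ℂ) (i : Fin 3) :
    prodVec x (c • conjVec x) (i, i) = c * (‖x i‖ ^ 2 : ℝ) := by
  simp only [prodVec, conjVec, Pi.smul_apply, smul_eq_mul, Complex.ofReal_pow]
  rw [mul_left_comm, Complex.mul_conj']

/-- characterization of the product vectors `x⊗y` with
`x⊗y ∈ range A[1,1,1]` and `x̄⊗y ∈ range A[1,1,1]^Γ`. -/
theorem stmt10 (x y : Fin 3 → ℂ) (hx : x ≠ 0) (hy : y ≠ 0) :
    (prodVec x y ∈ MatRange (Amat 1 1 1) ∧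
        prodVec (conjVec x) y ∈ MatRange (ptrans (Amat 1 1 1))) ↔
      ((∃ c : ℂ, c ≠ 0 ∧ y = c • conjVec x) ∧
        ‖x 0‖ = ‖x 1‖ ∧ ‖x 1‖ = ‖x 2‖) := by
  rw [mem_range_Amat_one_iff, mem_range_ptrans_Amat_one_iff,
    ← Fin.forall_forall_eq_iff_three fun i => ‖x i‖]
  constructor
  · rintro ⟨hdiag, hsymm⟩
    obtain ⟨c, rfl⟩ := exists_eq_smul_of_forall_mul_eq_mul (conjVec_ne_zero hx) hsymm
    have hc : c ≠ 0 := by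
      rintro rfl
      exact hy (zero_smul _ _)
    refine ⟨⟨c, hc, rfl⟩, fun i j => ?_⟩
    have hij := hdiag i j
    simp only [prodVec_smul_conjVec_self, mul_right_inj' hc, Complex.ofReal_inj] at hij
    exact (pow_left_inj₀ (norm_nonneg _) (norm_nonneg _) two_ne_zero).mp hij
  · rintro ⟨⟨c, -, rfl⟩, hnorm⟩
    refine ⟨fun i j => by rw [prodVec_smul_conjVec_self, prodVec_smul_conjVec_self, hnorm i j],
      fun i k => ?_⟩
    simp only [prodVec, Pi.smul_apply, smul_eq_mul]
    ring
end

section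
/- Let b > 0 with b ≠ 1. For nonzero vectors x, y ∈ ℂ³, the product vector x⊗y lies in the range of A[2, b, 1/b] and its partial conjugate x̄⊗y lies in the range of A[2, b, 1/b]^Γ if and only if x⊗y is a nonzero scalar multiple of a product vector of one of the three forms (0, w̄₂, b w̄₃)ᵗ ⊗ (0, w₂, w₃)ᵗ, (b w̄₁, 0, w̄₃)ᵗ ⊗ (w₁, 0, w₃)ᵗ, or (w̄₁, b w̄₂, 0)ᵗ ⊗ (w₁, w₂, 0)ᵗ for some complex numbers w₁, w₂, w₃. -/
open Matrix BigOperators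
open scoped ComplexOrder

/-!
`A[2,b,1/b]` is invertible, so only the condition on `x̄ ⊗ y` matters. Besides the diagonal on the
`eᵢ ⊗ eᵢ`, the partial transpose consists of the rank-one blocks `[[1/b, 1], [1, b]]` on
`span {eᵢ ⊗ eᵢ₊₁, eᵢ₊₁ ⊗ eᵢ}`, so `x̄ ⊗ y ∈ range A^Γ` means `x̄ᵢ₊₁ yᵢ = b x̄ᵢ yᵢ₊₁` for all `i` mod 3.
Multiplying the three relations gives `(1 - b³) ∏ x̄ᵢ yᵢ = 0`; once one coordinate of `x` or `y`
vanishes, the relations force `xᵢ = yᵢ = 0` for the same `i`, and the remaining relation says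
that `(xᵢ₊₁, xᵢ₊₂)` is proportional to `(ȳᵢ₊₁, b ȳᵢ₊₂)`.
-/

lemma Fin.three_eq_or_eq_add_one_or_eq_add_two (j k : Fin 3) : k = j ∨ k = j + 1 ∨ k = j + 2 := by
  revert j k; decide

lemma exists_eq_mul_and_eq_mul {K : Type*} [Field K] {p q r s : K} (hrs : r ≠ 0 ∨ s ≠ 0)
    (h : p * s = q * r) : ∃ c, p = c * r ∧ q = c * s := by
  rcases hrs with hr | hs
  · exact ⟨p / r, by field_simp, by field_simp; linear_combination -h⟩
  · exact ⟨q / s, by field_simp; linear_combination h, by field_simp⟩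

lemma exists_smul_eq_of_prodVec_eq_smul {x y X Y : Fin 3 → ℂ} (hx : x ≠ 0) (hy : y ≠ 0) {c : ℂ}
    (h : prodVec x y = c • prodVec X Y) : ∃ α β : ℂ, x = α • X ∧ y = β • Y := by
  obtain ⟨i, hi⟩ := Function.ne_iff.mp hx
  obtain ⟨k, hk⟩ := Function.ne_iff.mp hy
  have he : ∀ i k, x i * y k = c * (X i * Y k) := fun i k => congrFun h (i, k)
  refine ⟨c * Y k / y k, c * X i / x i, funext fun j => ?_, funext fun j => ?_⟩
  · rw [Pi.smul_apply, smul_eq_mul, div_mul_eq_mul_div, eq_div_iff hk]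
    linear_combination he j k
  · rw [Pi.smul_apply, smul_eq_mul, div_mul_eq_mul_div, eq_div_iff hi]
    linear_combination he i j

lemma mem_range_Amat {b : ℝ} (hb : b ≠ 0) (v : V9) : v ∈ MatRange (Amat 2 b (1 / b)) := by
  have hb' : (b : ℂ) ≠ 0 := by exact_mod_cast hb
  -- on the block spanned by the `e_i ⊗ e_i` the matrix is `I + J`, whose inverse is `I - J / 4`
  refine ⟨fun p => if p.1 = p.2 then v p - (v (0, 0) + v (1, 1) + v (2, 2)) / 4
    else if p.2 = p.1 + 1 then b * v p else v p / b, funext fun p => ?_⟩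
  simp only [Matrix.mulVecLin_apply, Matrix.mulVec, dotProduct, Fintype.sum_prod_type,
    Fin.sum_univ_three, Amat]
  fin_cases p <;> simp [Prod.ext_iff] <;> field_simp <;> ring

lemma mem_range_ptrans_Amat_iff {b : ℝ} (hb : b ≠ 0) (v : V9) :
    v ∈ MatRange (ptrans (Amat 2 b (1 / b))) ↔ ∀ i : Fin 3, v (i + 1, i) = b * v (i, i + 1) := by
  have hb' : (b : ℂ) ≠ 0 := by exact_mod_cast hb
  constructor
  · rintro ⟨w, rfl⟩ i
    simp only [Matrix.mulVecLin_apply, Matrix.mulVec, dotProduct, Fintype.sum_prod_type,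
      Fin.sum_univ_three, ptrans, Amat]
    fin_cases i <;> simp [Prod.ext_iff] <;> field_simp
  · intro h
    refine ⟨fun p => if p.1 = p.2 then v p / 2 else if p.1 = p.2 + 1 then v (p.2, p.1) else 0,
      funext fun p => ?_⟩
    have h0 := h 0
    have h1 := h 1
    have h2 := h 2
    simp only [Matrix.mulVecLin_apply, Matrix.mulVec, dotProduct, Fintype.sum_prod_type,
      Fin.sum_univ_three, ptrans, Amat]
    fin_cases p <;> simp [Prod.ext_iff] at h0 h1 h2 ⊢ <;> field_simp <;> simp [h0, h1, h2]

def GammaRel {n : ℕ} [NeZero n] (b : ℂ) (x y : Fin n → ℂ) : Prop :=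
  ∀ i, star (x (i + 1)) * y i = b * (star (x i) * y (i + 1))

lemma prodVec_conjVec_mem_range_iff {b : ℝ} (hb : b ≠ 0) (x y : Fin 3 → ℂ) :
    prodVec (conjVec x) y ∈ MatRange (ptrans (Amat 2 b (1 / b))) ↔ GammaRel (b : ℂ) x y := by
  rw [mem_range_ptrans_Amat_iff hb]
  simp [GammaRel, prodVec, conjVec]

def twist (b : ℂ) (i : Fin 3) (w : Fin 3 → ℂ) : Fin 3 → ℂ :=
  fun j => star ((if j = i + 1 then 1 else b) * w j)

lemma gammaRel_twist {b : ℂ} {i : Fin 3} {w : Fin 3 → ℂ} (hw : w i = 0) :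
    GammaRel b (twist b i w) w := by
  intro j
  fin_cases i <;> fin_cases j <;> simp_all [twist] <;> ring

namespace GammaRel

section

variable {n : ℕ} [NeZero n] {b : ℂ} {x y : Fin n → ℂ}

lemma smul (h : GammaRel b x y) (α β : ℂ) : GammaRel b (α • x) (β • y) := fun i => by
  simp only [Pi.smul_apply, smul_eq_mul, star_mul']
  linear_combination star α * β * h i

lemma prod_mul_prod_eq_zero (h : GammaRel b x y) (hb : b ^ n ≠ 1) :
    (∏ i, star (x i)) * ∏ i, y i = 0 := by
  have hprod := Finset.prod_congr rfl fun i (_ : i ∈ Finset.univ) => h i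
  have shift : ∀ f : Fin n → ℂ, ∏ i, f (i + 1) = ∏ i, f i :=
    fun f => Equiv.prod_comp (Equiv.addRight 1) f
  simp only [Finset.prod_mul_distrib, Finset.prod_const, Finset.card_univ, Fintype.card_fin,
    shift fun i => star (x i), shift y] at hprod
  have : (1 - b ^ n) * ((∏ i, star (x i)) * ∏ i, y i) = 0 := by linear_combination hprod
  exact (mul_eq_zero.mp this).resolve_left (sub_ne_zero.mpr hb.symm)

lemma exists_apply_eq_zero (h : GammaRel b x y) (hb : b ^ n ≠ 1) : ∃ j, x j = 0 ∨ y j = 0 := by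
  simpa [Finset.prod_eq_zero_iff, or_comm, exists_or] using h.prod_mul_prod_eq_zero hb

end

section

variable {b : ℂ} {x y : Fin 3 → ℂ}

lemma apply_eq_zero_of_left (hb : b ≠ 0) (h : GammaRel b x y) (hx : x ≠ 0) {j : Fin 3}
    (hj : x j = 0) : y j = 0 := by
  by_contra hyj
  have hprev := h (j + 2)
  rw [add_assoc, show (2 : Fin 3) + 1 = 0 from rfl, add_zero] at hprev
  refine hx (funext fun k => ?_)
  rcases Fin.three_eq_or_eq_add_one_or_eq_add_two j k with rfl | rfl | rfl
  · exact hj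
  · simpa [hj, hyj] using h j
  · simpa [hj, hyj, hb] using hprev

lemma apply_eq_zero_of_right (hb : b ≠ 0) (h : GammaRel b x y) (hy : y ≠ 0) {j : Fin 3}
    (hj : y j = 0) : x j = 0 := by
  by_contra hxj
  have hprev := h (j + 2)
  rw [add_assoc, show (2 : Fin 3) + 1 = 0 from rfl, add_zero] at hprev
  refine hy (funext fun k => ?_)
  rcases Fin.three_eq_or_eq_add_one_or_eq_add_two j k with rfl | rfl | rfl
  · exact hj
  · simpa [hj, hxj, hb] using h j
  · simpa [hj, hxj] using hprev

lemma exists_apply_eq_zero_and (hb0 : b ≠ 0) (hb : b ^ 3 ≠ 1) (h : GammaRel b x y)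
    (hx : x ≠ 0) (hy : y ≠ 0) : ∃ j, x j = 0 ∧ y j = 0 := by
  obtain ⟨j, hj | hj⟩ := h.exists_apply_eq_zero hb
  exacts [⟨j, hj, h.apply_eq_zero_of_left hb0 hx hj⟩, ⟨j, h.apply_eq_zero_of_right hb0 hy hj, hj⟩]

lemma exists_eq_smul_twist (hb : b ≠ 0) (h : GammaRel b x y)
    (hy : y ≠ 0) {i : Fin 3} (hxi : x i = 0) (hyi : y i = 0) : ∃ c : ℂ, x = c • twist b i y := by
  have hy' : y (i + 1) ≠ 0 ∨ y (i + 2) ≠ 0 := by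
    by_contra! H
    refine hy (funext fun k => ?_)
    rcases Fin.three_eq_or_eq_add_one_or_eq_add_two i k with rfl | rfl | rfl
    exacts [hyi, H.1, H.2]
  have hrs : star (y (i + 1)) ≠ 0 ∨ star (b * y (i + 2)) ≠ 0 := by simpa [hb] using hy'
  have hrel : x (i + 1) * star (b * y (i + 2)) = x (i + 2) * star (y (i + 1)) := by
    have := congrArg star (h (i + 1))
    simp only [star_mul', star_star, add_assoc, show (1 : Fin 3) + 1 = 2 from rfl] at this ⊢
    linear_combination -this
  obtain ⟨c, hc1, hc2⟩ := exists_eq_mul_and_eq_mul hrs hrel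
  refine ⟨c, funext fun k => ?_⟩
  rcases Fin.three_eq_or_eq_add_one_or_eq_add_two i k with rfl | rfl | rfl
  · simp [twist, hxi, hyi]
  · simpa [twist] using hc1
  · simpa [twist] using hc2

end

end GammaRel

lemma gammaRel_iff_exists_twist {b : ℂ} (hb0 : b ≠ 0) (hb : b ^ 3 ≠ 1) {x y : Fin 3 → ℂ}
    (hx : x ≠ 0) (hy : y ≠ 0) :
    GammaRel b x y ↔
      ∃ c : ℂ, c ≠ 0 ∧ ∃ i w, w i = 0 ∧ prodVec x y = c • prodVec (twist b i w) w := by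
  constructor
  · intro h
    obtain ⟨i, hxi, hyi⟩ := h.exists_apply_eq_zero_and hb0 hb hx hy
    obtain ⟨c, rfl⟩ := h.exists_eq_smul_twist hb0 hy hxi hyi
    refine ⟨c, fun hc => hx (by simp [hc]), i, y, hyi, funext fun p => ?_⟩
    simp [prodVec, mul_assoc]
  · rintro ⟨c, -, i, w, hw, hxy⟩
    obtain ⟨α, β, rfl, rfl⟩ := exists_smul_eq_of_prodVec_eq_smul hx hy hxy
    exact (gammaRel_twist hw).smul α β

lemma twist_zero (b : ℝ) (w1 w2 : ℂ) :
    twist b 0 ![0, w1, w2] = ![0, star w1, (b : ℂ) * star w2] := by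
  funext j; fin_cases j <;> simp [twist]

lemma twist_one (b : ℝ) (w0 w2 : ℂ) :
    twist b 1 ![w0, 0, w2] = ![(b : ℂ) * star w0, 0, star w2] := by
  funext j; fin_cases j <;> simp [twist]

lemma twist_two (b : ℝ) (w0 w1 : ℂ) :
    twist b 2 ![w0, w1, 0] = ![star w0, (b : ℂ) * star w1, 0] := by
  funext j; fin_cases j <;> simp [twist]

lemma exists_twist_iff (b : ℝ) (P : (Fin 3 → ℂ) → (Fin 3 → ℂ) → Prop) :
    (∃ i w, w i = 0 ∧ P (twist b i w) w) ↔
      ((∃ w2 w3 : ℂ, P ![0, star w2, (b : ℂ) * star w3] ![0, w2, w3]) ∨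
        (∃ w1 w3 : ℂ, P ![(b : ℂ) * star w1, 0, star w3] ![w1, 0, w3]) ∨
        (∃ w1 w2 : ℂ, P ![star w1, (b : ℂ) * star w2, 0] ![w1, w2, 0])) := by
  constructor
  · rintro ⟨i, w, hw, h⟩
    obtain ⟨w0, w1, w2, rfl⟩ : ∃ w0 w1 w2, w = ![w0, w1, w2] :=
      ⟨w 0, w 1, w 2, by funext j; fin_cases j <;> rfl⟩
    obtain rfl | rfl | rfl : i = 0 ∨ i = 1 ∨ i = 2 := by fin_cases i <;> simp
    · obtain rfl : w0 = 0 := hw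
      exact Or.inl ⟨w1, w2, by rwa [twist_zero] at h⟩
    · obtain rfl : w1 = 0 := hw
      exact Or.inr (Or.inl ⟨w0, w2, by rwa [twist_one] at h⟩)
    · obtain rfl : w2 = 0 := hw
      exact Or.inr (Or.inr ⟨w0, w1, by rwa [twist_two] at h⟩)
  · rintro (⟨w2, w3, h⟩ | ⟨w1, w3, h⟩ | ⟨w1, w2, h⟩)
    · exact ⟨0, ![0, w2, w3], rfl, by rwa [twist_zero]⟩
    · exact ⟨1, ![w1, 0, w3], rfl, by rwa [twist_one]⟩
    · exact ⟨2, ![w1, w2, 0], rfl, by rwa [twist_two]⟩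

/-- characterization of the product vectors `x⊗y` with
`x⊗y ∈ range A[2,b,1/b]` and `x̄⊗y ∈ range A[2,b,1/b]^Γ`, for `b > 0`, `b ≠ 1`. -/
theorem stmt11 (b : ℝ) (hb : 0 < b) (hb1 : b ≠ 1) (x y : Fin 3 → ℂ)
    (hx : x ≠ 0) (hy : y ≠ 0) :
    (prodVec x y ∈ MatRange (Amat 2 b (1 / b)) ∧
        prodVec (conjVec x) y ∈ MatRange (ptrans (Amat 2 b (1 / b)))) ↔
      ∃ c : ℂ, c ≠ 0 ∧
        ((∃ w2 w3 : ℂ,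
            prodVec x y = c • prodVec ![0, star w2, (b : ℂ) * star w3] ![0, w2, w3]) ∨
         (∃ w1 w3 : ℂ,
            prodVec x y = c • prodVec ![(b : ℂ) * star w1, 0, star w3] ![w1, 0, w3]) ∨
         (∃ w1 w2 : ℂ,
            prodVec x y = c • prodVec ![star w1, (b : ℂ) * star w2, 0] ![w1, w2, 0])) := by
  have hb0 : (b : ℂ) ≠ 0 := by exact_mod_cast hb.ne'
  have hb3 : (b : ℂ) ^ 3 ≠ 1 := by
    exact_mod_cast (pow_eq_one_iff_of_nonneg hb.le three_ne_zero).not.mpr hb1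
  rw [and_iff_right (mem_range_Amat hb.ne' _), prodVec_conjVec_mem_range_iff hb.ne',
    gammaRel_iff_exists_twist hb0 hb3 hx hy]
  exact exists_congr fun c => and_congr_right fun _ =>
    exists_twist_iff b fun X Y => prodVec x y = c • prodVec X Y
end

section
/- Let b > 0 with b ≠ 1, and let z = x⊗y be a nonzero product vector with x⊗y ∈ range A[2, b, 1/b] and x̄⊗y ∈ range A[2, b, 1/b]^Γ. Then ⟨zz*, Φ(1/b)⟩ = 0 if and only if z is a nonzero scalar multiple of a product vector of one of the three forms (0, w̄₂, b w̄₃)ᵗ ⊗ (0, w₂, w₃)ᵗ with |w₂|² = b|w₃|², (b w̄₁, 0, w̄₃)ᵗ ⊗ (w₁, 0, w₃)ᵗ with |w₃|² = b|w₁|², or (w̄₁, b w̄₂, 0)ᵗ ⊗ (w₁, w₂, 0)ᵗ with |w₁|² = b|w₂|². -/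
/-!
On the coordinates `(i,i+1), (i+1,i)` the matrix `A[a,b,1/b]^Γ` is the rank-one block
`[[1/b, 1], [1, b]]`, so `x̄⊗y` lies in its range only if `x̄ᵢ₊₁ yᵢ = b x̄ᵢ yᵢ₊₁` for every `i`
(mod 3). Multiplying the three relations gives `(1 - b³) ∏ x̄ᵢ yᵢ = 0`; as `x` and `y` vanish at
the same coordinates, some `k` has `x_k = y_k = 0`. The relation at `k+1` makes
`x_{k+1} y_{k+1} · conj (x_{k+2} y_{k+2})` a nonnegative real, and the pairing collapses to
`(b-1)²/(b²-b+1) · (|x_{k+1} y_{k+1}| - |x_{k+2} y_{k+2}|)²`, which vanishes exactly on the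
displayed vectors.
-/

open Matrix BigOperators
open scoped ComplexOrder

/-- 3×3 complex matrices. -/
abbrev M3 : Type := Matrix (Fin 3) (Fin 3) ℂ

/-- The generalized Choi map `Φ[α,β,γ]`. -/
noncomputable def PhiMap (α β γ : ℝ) (X : M3) : M3 := fun i j =>
  if i = j then (α : ℂ) * X i i + (β : ℂ) * X (i + 1) (i + 1) + (γ : ℂ) * X (i + 2) (i + 2)
  else - X i j

/-- The Choi matrix `C_φ = ∑ e_{ij} ⊗ φ(e_{ij})`. -/
noncomputable def ChoiMat (φ : M3 → M3) : M9 :=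
  fun p q => φ (Matrix.single p.1 q.1 1) p.2 q.2

/-- The pairing `⟨A,φ⟩ = Tr(C_φ Aᵗ)`. -/
noncomputable def pairing (A : M9) (φ : M3 → M3) : ℂ := Matrix.trace (ChoiMat φ * Aᵀ)

/-- The one-parameter family `Φ(t)`. -/
noncomputable def PhiT (t : ℝ) : M3 → M3 :=
  PhiMap ((1 - t) ^ 2 / (1 - t + t ^ 2)) (t ^ 2 / (1 - t + t ^ 2)) (1 / (1 - t + t ^ 2))

/-- The dual face `φ′ = {A ∈ V₁ : ⟨A,φ⟩ = 0}`. -/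
def dualFace (φ : M3 → M3) : Set M9 := {A | A ∈ V1 ∧ pairing A φ = 0}

open ComplexConjugate

lemma Fin.sum_univ_three_from {M : Type*} [AddCommMonoid M] (k : Fin 3) (f : Fin 3 → M) :
    ∑ i, f i = f k + f (k + 1) + f (k + 2) := by
  rw [← Equiv.sum_comp (Equiv.addLeft k) f]
  simp [Fin.sum_univ_three]

lemma Fin.funext_three_from {α : Type*} {f g : Fin 3 → α} (k : Fin 3) (h₀ : f k = g k)
    (h₁ : f (k + 1) = g (k + 1)) (h₂ : f (k + 2) = g (k + 2)) : f = g := by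
  funext i
  have hi : i = k ∨ i = k + 1 ∨ i = k + 2 := by fin_cases k <;> fin_cases i <;> decide
  rcases hi with rfl | rfl | rfl <;> assumption

lemma prodVec_eq_zero_iff {x y : Fin 3 → ℂ} : prodVec x y = 0 ↔ x = 0 ∨ y = 0 := by
  constructor
  · intro h
    by_contra! hne
    obtain ⟨⟨i, hi⟩, ⟨j, hj⟩⟩ := And.intro (Function.ne_iff.mp hne.1) (Function.ne_iff.mp hne.2)
    exact mul_ne_zero hi hj (congrFun h (i, j))
  · rintro (rfl | rfl) <;> ext <;> simp [prodVec]

lemma smul_prodVec (c : ℂ) (x y : Fin 3 → ℂ) : c • prodVec x y = prodVec (c • x) y := by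
  ext; simp [prodVec, mul_assoc]

/-- The off-diagonal part of the Choi matrix contributes `-∑_{i ≠ j} uᵢ ūⱼ` with `uᵢ = xᵢ yᵢ`,
which is `∑ |uᵢ|² - |∑ uᵢ|²`. -/
lemma pairing_rankOne_prodVec_phiMap (α β γ : ℝ) (x y : Fin 3 → ℂ) :
    pairing (rankOne (prodVec x y)) (PhiMap α β γ) =
      ((∑ i, ((α + 1) * ‖x i * y i‖ ^ 2 + β * ‖x (i + 1) * y i‖ ^ 2 + γ * ‖x (i + 2) * y i‖ ^ 2)
        - ‖∑ i, x i * y i‖ ^ 2 : ℝ) : ℂ) := by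
  simp only [pairing, ChoiMat, PhiMap, rankOne, prodVec, Matrix.trace, Matrix.diag,
    Matrix.mul_apply, Matrix.transpose_apply, Matrix.vecMulVec_apply, Fintype.sum_prod_type,
    Fin.sum_univ_three, Matrix.single_apply]
  push_cast
  simp only [← Complex.mul_conj', map_add, map_mul, and_self, ↓reduceIte, mul_one, mul_zero,
    add_zero, Fin.isValue, and_false, neg_zero, zero_mul, and_true, neg_mul, one_mul, zero_add]
  ring

lemma PhiT_one_div {b : ℝ} (hb : b ≠ 0) :
    PhiT (1 / b) = PhiMap ((b - 1) ^ 2 / (b ^ 2 - b + 1)) (1 / (b ^ 2 - b + 1))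
      (b ^ 2 / (b ^ 2 - b + 1)) := by
  have hD : b ^ 2 - b + 1 ≠ 0 := by nlinarith [sq_nonneg (b - 1 / 2)]
  unfold PhiT
  congr 1 <;> field_simp

section ConjMulRelation

variable {b : ℝ} {x₁ x₂ y₁ y₂ : ℂ}

lemma norm_mul_swap_of_conj_mul_eq (hb : 0 ≤ b) (h : conj x₂ * y₁ = b * (conj x₁ * y₂)) :
    ‖x₂ * y₁‖ = b * ‖x₁ * y₂‖ := by
  simpa [norm_mul, abs_of_nonneg hb] using congrArg norm h

lemma mul_conj_mul_eq_of_conj_mul_eq (h : conj x₂ * y₁ = b * (conj x₁ * y₂)) :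
    x₁ * y₁ * conj (x₂ * y₂) = b * ‖x₁ * y₂‖ ^ 2 := by
  rw [← Complex.mul_conj', map_mul, map_mul]
  linear_combination (x₁ * conj y₂) * h

lemma norm_mul_mul_norm_mul_of_conj_mul_eq (hb : 0 ≤ b) (h : conj x₂ * y₁ = b * (conj x₁ * y₂)) :
    ‖x₁ * y₁‖ * ‖x₂ * y₂‖ = b * ‖x₁ * y₂‖ ^ 2 := by
  simpa [norm_mul, abs_of_nonneg hb] using congrArg norm (mul_conj_mul_eq_of_conj_mul_eq h)

lemma norm_add_of_conj_mul_eq (hb : 0 ≤ b) (h : conj x₂ * y₁ = b * (conj x₁ * y₂)) :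
    ‖x₁ * y₁ + x₂ * y₂‖ = ‖x₁ * y₁‖ + ‖x₂ * y₂‖ := by
  have hre : (x₁ * y₁ * conj (x₂ * y₂)).re = ‖x₁ * y₁‖ * ‖x₂ * y₂‖ := by
    rw [mul_conj_mul_eq_of_conj_mul_eq h, norm_mul_mul_norm_mul_of_conj_mul_eq hb h]
    norm_cast
  rw [← sq_eq_sq₀ (norm_nonneg _) (by positivity), Complex.sq_norm, Complex.normSq_add, hre,
    ← Complex.sq_norm, ← Complex.sq_norm]
  ring

lemma norm_mul_eq_norm_mul_iff (hb : 0 ≤ b) (h : conj x₂ * y₁ = b * (conj x₁ * y₂))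
    (hx₁ : x₁ ≠ 0) (hy₁ : y₁ ≠ 0) :
    ‖x₁ * y₁‖ = ‖x₂ * y₂‖ ↔ ‖y₁‖ ^ 2 = b * ‖y₂‖ ^ 2 := by
  have hswap := norm_mul_swap_of_conj_mul_eq hb h
  rw [norm_mul, norm_mul] at hswap ⊢
  have key : ‖y₁‖ * (‖x₁‖ * ‖y₁‖ - ‖x₂‖ * ‖y₂‖) = ‖x₁‖ * (‖y₁‖ ^ 2 - b * ‖y₂‖ ^ 2) := by
    linear_combination -‖y₂‖ * hswap
  rw [← sub_eq_zero, ← sub_eq_zero (a := ‖y₁‖ ^ 2)]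
  constructor <;> intro h0 <;> rw [h0, mul_zero] at key
  · exact (mul_eq_zero.mp key.symm).resolve_left (norm_ne_zero_iff.mpr hx₁)
  · exact (mul_eq_zero.mp key).resolve_left (norm_ne_zero_iff.mpr hy₁)

end ConjMulRelation

lemma pairing_PhiT_one_div_of_eq_zero {b : ℝ} (hb : 0 < b) {x y : Fin 3 → ℂ} {k : Fin 3}
    (hxk : x k = 0) (hyk : y k = 0)
    (h : conj (x (k + 2)) * y (k + 1) = b * (conj (x (k + 1)) * y (k + 2))) :
    pairing (rankOne (prodVec x y)) (PhiT (1 / b)) =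
      (((b - 1) ^ 2 / (b ^ 2 - b + 1) *
        (‖x (k + 1) * y (k + 1)‖ - ‖x (k + 2) * y (k + 2)‖) ^ 2 : ℝ) : ℂ) := by
  have hD : b ^ 2 - b + 1 ≠ 0 := by nlinarith [sq_nonneg (b - 1 / 2)]
  rw [PhiT_one_div hb.ne', pairing_rankOne_prodVec_phiMap, Fin.sum_univ_three_from k,
    Fin.sum_univ_three_from k]
  congr 1
  simp only [add_assoc, Fin.reduceAdd, add_zero, hxk, hyk, zero_mul, mul_zero, norm_zero,
    ne_eq, OfNat.ofNat_ne_zero, not_false_eq_true, zero_pow, zero_add]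
  rw [norm_mul_swap_of_conj_mul_eq hb.le h, norm_add_of_conj_mul_eq hb.le h]
  have hAB := norm_mul_mul_norm_mul_of_conj_mul_eq hb.le h
  generalize ‖x (k + 1) * y (k + 1)‖ = A at *
  generalize ‖x (k + 2) * y (k + 2)‖ = B at *
  generalize ‖x (k + 1) * y (k + 2)‖ = C at *
  have hD' : b * (b - 1) + 1 ≠ 0 := by convert hD using 1; ring
  rw [div_add_one hD]
  field_simp
  linear_combination -2 * b * hAB

lemma pairing_PhiT_one_div_eq_zero_iff {b : ℝ} (hb : 0 < b) (hb1 : b ≠ 1) {x y : Fin 3 → ℂ}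
    {k : Fin 3} (hxk : x k = 0) (hyk : y k = 0)
    (h : conj (x (k + 2)) * y (k + 1) = b * (conj (x (k + 1)) * y (k + 2))) :
    pairing (rankOne (prodVec x y)) (PhiT (1 / b)) = 0 ↔
      ‖x (k + 1) * y (k + 1)‖ = ‖x (k + 2) * y (k + 2)‖ := by
  have hD : 0 < b ^ 2 - b + 1 := by nlinarith [sq_nonneg (b - 1 / 2)]
  rw [pairing_PhiT_one_div_of_eq_zero hb hxk hyk h, Complex.ofReal_eq_zero]
  simp [hD.ne', sub_eq_zero, hb1]

lemma pairing_PhiT_one_div_eq_zero_of_eq_smul {b : ℝ} (hb : 0 < b) {x y : Fin 3 → ℂ} {k : Fin 3}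
    {c : ℂ} (hxk : x k = 0) (hyk : y k = 0) (hx₁ : x (k + 1) = c * conj (y (k + 1)))
    (hx₂ : x (k + 2) = c * (b * conj (y (k + 2)))) (hy : ‖y (k + 1)‖ ^ 2 = b * ‖y (k + 2)‖ ^ 2) :
    pairing (rankOne (prodVec x y)) (PhiT (1 / b)) = 0 := by
  have h : conj (x (k + 2)) * y (k + 1) = b * (conj (x (k + 1)) * y (k + 2)) := by
    rw [hx₁, hx₂]
    simp only [map_mul, Complex.conj_conj, Complex.conj_ofReal]
    ring
  have hnorm : ‖x (k + 1) * y (k + 1)‖ = ‖x (k + 2) * y (k + 2)‖ := by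
    simp only [hx₁, hx₂, norm_mul, Complex.norm_conj, Complex.norm_real, Real.norm_eq_abs,
      abs_of_pos hb]
    linear_combination ‖c‖ * hy
  rw [pairing_PhiT_one_div_of_eq_zero hb hxk hyk h, hnorm]
  simp

def PTRangeCond (b : ℝ) (x y : Fin 3 → ℂ) : Prop :=
  ∀ i : Fin 3, conj (x (i + 1)) * y i = b * (conj (x i) * y (i + 1))

lemma ptRangeCond_of_mem_range_ptrans_Amat {a b : ℝ} (hb : b ≠ 0) {x y : Fin 3 → ℂ}
    (h : prodVec (conjVec x) y ∈ MatRange (ptrans (Amat a b (1 / b)))) : PTRangeCond b x y := by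
  obtain ⟨w, hw⟩ := h
  have hb' : (b : ℂ) ≠ 0 := by exact_mod_cast hb
  intro i
  have e₁ := congrFun hw (i, i + 1)
  have e₂ := congrFun hw (i + 1, i)
  fin_cases i <;>
  · simp only [one_div, Fin.zero_eta, Fin.mk_one, Fin.reduceFinMk, Fin.isValue, Fin.reduceAdd,
      zero_add, add_zero, mulVecBilin_apply, mulVec, dotProduct, ptrans, Amat, Prod.mk.injEq,
      right_eq_add, Complex.ofReal_inv, ite_mul, one_mul, zero_mul, Fintype.sum_prod_type,
      Fin.sum_univ_three, one_ne_zero, zero_ne_one, and_false, and_true, ↓reduceIte, Fin.reduceEq,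
      prodVec, conjVec] at e₁ e₂ ⊢
    field_simp at e₁
    linear_combination e₁ - e₂

namespace PTRangeCond

variable {b : ℝ} {x y : Fin 3 → ℂ}

lemma eq_zero_iff (h : PTRangeCond b x y) (hb : b ≠ 0) (hz : prodVec x y ≠ 0) (i : Fin 3) :
    x i = 0 ↔ y i = 0 := by
  have hb' : (b : ℂ) ≠ 0 := by exact_mod_cast hb
  have hi := h i
  have hi' : conj (x i) * y (i + 2) = b * (conj (x (i + 2)) * y i) := by
    simpa [add_assoc] using h (i + 2)
  rw [Ne, prodVec_eq_zero_iff, not_or] at hz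
  constructor
  · intro hx
    by_contra hy
    refine hz.1 (Fin.funext_three_from i hx ?_ ?_)
    · simpa [hx, hy] using hi
    · simpa [hx, hy, hb'] using hi'
  · intro hy
    by_contra hx
    refine hz.2 (Fin.funext_three_from i hy ?_ ?_)
    · simpa [hx, hy, hb'] using hi
    · simpa [hx, hy] using hi'

lemma exists_eq_zero (h : PTRangeCond b x y) (hb : 0 < b) (hb1 : b ≠ 1) (hz : prodVec x y ≠ 0) :
    ∃ k, x k = 0 ∧ y k = 0 := by
  have hb3 : (1 : ℂ) - (b : ℂ) ^ 3 ≠ 0 := by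
    rw [sub_ne_zero, ne_comm]
    exact_mod_cast (pow_eq_one_iff_of_nonneg hb.le three_ne_zero).not.mpr hb1
  have hprod : ((1 : ℂ) - (b : ℂ) ^ 3) * ∏ i, conj (x i) * y i = 0 := by
    have h₀ := h 0
    have h₁ := h 1
    have h₂ := h 2
    simp only [Fin.prod_univ_three, Fin.reduceAdd, zero_add] at h₀ h₁ h₂ ⊢
    linear_combination (conj (x 2) * y 1 * (conj (x 0) * y 2)) * h₀
      + ((b : ℂ) * (conj (x 0) * y 1) * (conj (x 0) * y 2)) * h₁
      + ((b : ℂ) * (conj (x 0) * y 1) * ((b : ℂ) * (conj (x 1) * y 2))) * h₂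
  obtain ⟨k, -, hk⟩ := Finset.prod_eq_zero_iff.mp ((mul_eq_zero.mp hprod).resolve_left hb3)
  refine ⟨k, ?_⟩
  rcases mul_eq_zero.mp hk with hx | hy
  · have hx : x k = 0 := by simpa using hx
    exact ⟨hx, (h.eq_zero_iff hb.ne' hz k).mp hx⟩
  · exact ⟨(h.eq_zero_iff hb.ne' hz k).mpr hy, hy⟩

lemma exists_eq_smul_of_pairing_eq_zero (h : PTRangeCond b x y) (hb : 0 < b) (hb1 : b ≠ 1)
    (hz : prodVec x y ≠ 0) {k : Fin 3} (hxk : x k = 0) (hyk : y k = 0)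
    (h0 : pairing (rankOne (prodVec x y)) (PhiT (1 / b)) = 0) :
    ∃ c ≠ 0, x (k + 1) = c * conj (y (k + 1)) ∧ x (k + 2) = c * (b * conj (y (k + 2))) ∧
      ‖y (k + 1)‖ ^ 2 = b * ‖y (k + 2)‖ ^ 2 := by
  have hR : conj (x (k + 2)) * y (k + 1) = b * (conj (x (k + 1)) * y (k + 2)) := by
    simpa [add_assoc] using h (k + 1)
  have hnorm := (pairing_PhiT_one_div_eq_zero_iff hb hb1 hxk hyk hR).mp h0
  have hzero := h.eq_zero_iff hb.ne' hz
  have hx₁ : x (k + 1) ≠ 0 := by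
    intro hx₁
    have hx₂ : x (k + 2) = 0 := by
      rw [hx₁, zero_mul, norm_zero, eq_comm, norm_eq_zero, mul_eq_zero, ← hzero, or_self] at hnorm
      exact hnorm
    exact hz (prodVec_eq_zero_iff.mpr (Or.inl (Fin.funext_three_from k hxk hx₁ hx₂)))
  have hy₁ : y (k + 1) ≠ 0 := (hzero _).not.mp hx₁
  have hcy₁ : conj (y (k + 1)) ≠ 0 := (map_ne_zero _).mpr hy₁
  refine ⟨x (k + 1) / conj (y (k + 1)), div_ne_zero hx₁ hcy₁, by field_simp, ?_,
    (norm_mul_eq_norm_mul_iff hb.le hR hx₁ hy₁).mp hnorm⟩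
  have hR' := congrArg conj hR
  simp only [map_mul, Complex.conj_conj, Complex.conj_ofReal] at hR'
  field_simp
  linear_combination hR'

end PTRangeCond

theorem stmt12_general (b : ℝ) (hb : 0 < b) (hb1 : b ≠ 1) (x y : Fin 3 → ℂ)
    (hz : prodVec x y ≠ 0)
    (h2 : prodVec (conjVec x) y ∈ MatRange (ptrans (Amat 2 b (1 / b)))) :
    pairing (rankOne (prodVec x y)) (PhiT (1 / b)) = 0 ↔
      ∃ c : ℂ, c ≠ 0 ∧
        ((∃ w2 w3 : ℂ,
            prodVec x y = c • prodVec ![0, star w2, (b : ℂ) * star w3] ![0, w2, w3] ∧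
            ‖w2‖ ^ 2 = b * ‖w3‖ ^ 2) ∨
         (∃ w1 w3 : ℂ,
            prodVec x y = c • prodVec ![(b : ℂ) * star w1, 0, star w3] ![w1, 0, w3] ∧
            ‖w3‖ ^ 2 = b * ‖w1‖ ^ 2) ∨
         (∃ w1 w2 : ℂ,
            prodVec x y = c • prodVec ![star w1, (b : ℂ) * star w2, 0] ![w1, w2, 0] ∧
            ‖w1‖ ^ 2 = b * ‖w2‖ ^ 2)) := by
  have hR := ptRangeCond_of_mem_range_ptrans_Amat hb.ne' h2
  constructor
  · intro h0
    obtain ⟨k, hxk, hyk⟩ := hR.exists_eq_zero hb hb1 hz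
    obtain ⟨c, hc, hx₁, hx₂, hy⟩ := hR.exists_eq_smul_of_pairing_eq_zero hb hb1 hz hxk hyk h0
    refine ⟨c, hc, ?_⟩
    simp only [smul_prodVec]
    fin_cases k
    · refine Or.inl ⟨y 1, y 2, congrArg₂ prodVec ?_ ?_, hy⟩ <;> funext i <;> fin_cases i <;>
        simp_all
    · refine Or.inr (Or.inl ⟨y 0, y 2, congrArg₂ prodVec ?_ ?_, hy⟩) <;> funext i <;>
        fin_cases i <;> simp_all
    · refine Or.inr (Or.inr ⟨y 0, y 1, congrArg₂ prodVec ?_ ?_, hy⟩) <;> funext i <;>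
        fin_cases i <;> simp_all
  · rintro ⟨c, -, ⟨w₂, w₃, hxy, hw⟩ | ⟨w₁, w₃, hxy, hw⟩ | ⟨w₁, w₂, hxy, hw⟩⟩ <;>
      rw [hxy, smul_prodVec]
    · exact pairing_PhiT_one_div_eq_zero_of_eq_smul hb (k := 0) (c := c) (by simp) (by simp)
        (by simp) (by simp) (by simpa using hw)
    · exact pairing_PhiT_one_div_eq_zero_of_eq_smul hb (k := 1) (c := c) (by simp) (by simp)
        (by simp) (by simp) (by simpa using hw)
    · exact pairing_PhiT_one_div_eq_zero_of_eq_smul hb (k := 2) (c := c) (by simp) (by simp)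
        (by simp) (by simp) (by simpa using hw)

/-- for `b > 0`, `b ≠ 1` and a nonzero product vector `z = x⊗y` with
`x⊗y ∈ range A[2,b,1/b]` and `x̄⊗y ∈ range A[2,b,1/b]^Γ`, we have `⟨zz*, Φ(1/b)⟩ = 0`
iff `z` is a nonzero scalar multiple of one of the three displayed forms. -/
theorem stmt12 (b : ℝ) (hb : 0 < b) (hb1 : b ≠ 1) (x y : Fin 3 → ℂ)
    (hz : prodVec x y ≠ 0)
    (h1 : prodVec x y ∈ MatRange (Amat 2 b (1 / b)))
    (h2 : prodVec (conjVec x) y ∈ MatRange (ptrans (Amat 2 b (1 / b)))) :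
    pairing (rankOne (prodVec x y)) (PhiT (1 / b)) = 0 ↔
      ∃ c : ℂ, c ≠ 0 ∧
        ((∃ w2 w3 : ℂ,
            prodVec x y = c • prodVec ![0, star w2, (b : ℂ) * star w3] ![0, w2, w3] ∧
            ‖w2‖ ^ 2 = b * ‖w3‖ ^ 2) ∨
         (∃ w1 w3 : ℂ,
            prodVec x y = c • prodVec ![(b : ℂ) * star w1, 0, star w3] ![w1, 0, w3] ∧
            ‖w3‖ ^ 2 = b * ‖w1‖ ^ 2) ∨
         (∃ w1 w2 : ℂ,
            prodVec x y = c • prodVec ![star w1, (b : ℂ) * star w2, 0] ![w1, w2, 0] ∧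
            ‖w1‖ ^ 2 = b * ‖w2‖ ^ 2)) :=
  stmt12_general b hb hb1 x y hz h2
end
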